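/- As formal power series in ℤ[[q]], ∑_{n≥0} (-1)^n (2n+1) q^{n(n+1)} = (q^2;q^2)_∞^3 = ∏_{k≥1} (1-q^{2k})^3 (Jacobi's identity). -/

import Mathlib

open Finset

noncomputable section JacobiAux

local notation "R" => PowerSeries ℤ
local notation "px" => (PowerSeries.X : PowerSeries ℤ)
local notation "W" => (Polynomial.X : Polynomial (PowerSeries ℤ))
local notation "PC" => (Polynomial.C : PowerSeries ℤ →+* Polynomial (PowerSeries ℤ))


/-- partial product (q;q)_n with q = x^2 -/
noncomputable def Q2 (n : ℕ) : PowerSeries ℤ :=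
  ∏ k ∈ Finset.range n, (1 - px ^ (2 * (k + 1)))

/-- Gaussian binomial [n choose k] at q = x^2, as a power series. -/
noncomputable def gbx : ℕ → ℕ → PowerSeries ℤ
  | 0, 0 => 1
  | 0, _ + 1 => 0
  | _ + 1, 0 => 1
  | n + 1, k + 1 => px ^ (2 * (k + 1)) * gbx n (k + 1) + gbx n k

lemma gbx_zero_right (n : ℕ) : gbx n 0 = 1 := by cases n <;> rfl

lemma gbx_eq_zero : ∀ n k : ℕ, n < k → gbx n k = 0 := by
  intro n
  induction n with
  | zero => intro k hk; match k, hk with | k + 1, _ => rfl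
  | succ n ih =>
    intro k hk
    match k, hk with
    | k + 1, hk =>
      show px ^ (2 * (k + 1)) * gbx n (k + 1) + gbx n k = 0
      rw [ih (k+1) (by omega), ih k (by omega)]
      ring

lemma Q2_succ (n : ℕ) : Q2 (n + 1) = Q2 n * (1 - px ^ (2 * (n + 1))) := by
  rw [Q2, Finset.prod_range_succ]; rfl

lemma Q2_zero : Q2 0 = 1 := by simp [Q2]

lemma constantCoeff_Q2 (n : ℕ) : @PowerSeries.constantCoeff ℤ _ (Q2 n) = 1 := by
  rw [Q2, map_prod]
  apply Finset.prod_eq_one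
  intro k _
  rw [map_sub, map_one, map_pow, PowerSeries.constantCoeff_X]
  simp

lemma isUnit_Q2 (n : ℕ) : IsUnit (Q2 n) := by
  rw [PowerSeries.isUnit_iff_constantCoeff, constantCoeff_Q2]
  exact isUnit_one

/-- Key product formula: gbx n k * ((q;q)_k (q;q)_{n-k}) = (q;q)_n for k ≤ n. -/
lemma Qprod : ∀ n k : ℕ, k ≤ n → gbx n k * (Q2 k * Q2 (n - k)) = Q2 n := by
  intro n
  induction n with
  | zero => intro k hk; interval_cases k; simp [gbx, Q2_zero]
  | succ n ih =>
    intro k hk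
    match k with
    | 0 => simp [gbx_zero_right, Q2_zero]
    | k + 1 =>
      have hk' : k ≤ n := by omega
      show (px ^ (2 * (k + 1)) * gbx n (k + 1) + gbx n k) * (Q2 (k+1) * Q2 (n + 1 - (k+1))) = Q2 (n+1)
      have hnk : n + 1 - (k + 1) = n - k := by omega
      rw [hnk]
      have t2 : gbx n k * (Q2 (k+1) * Q2 (n - k)) = (1 - px ^ (2 * (k+1))) * Q2 n := by
        rw [Q2_succ k]
        calc gbx n k * (Q2 k * (1 - px ^ (2 * (k + 1))) * Q2 (n - k))
            = (1 - px ^ (2 * (k+1))) * (gbx n k * (Q2 k * Q2 (n - k))) := by ring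
          _ = (1 - px ^ (2 * (k+1))) * Q2 n := by rw [ih k hk']
      have t1 : gbx n (k+1) * (Q2 (k+1) * Q2 (n - k)) = (1 - px ^ (2 * (n - k))) * Q2 n := by
        rcases Nat.lt_or_ge n (k+1) with h | h
        · have hkn : k = n := by omega
          rw [gbx_eq_zero n (k+1) h]
          subst hkn
          simp
        · have : n - k = (n - (k+1)) + 1 := by omega
          rw [this, Q2_succ (n - (k+1))]
          have h2 : 2 * (n - (k+1) + 1) = 2 * (n - k) := by omega
          rw [h2]
          calc gbx n (k+1) * (Q2 (k+1) * (Q2 (n - (k+1)) * (1 - px ^ (2 * (n - k)))))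
              = (1 - px ^ (2 * (n - k))) * (gbx n (k+1) * (Q2 (k+1) * Q2 (n - (k+1)))) := by ring
            _ = (1 - px ^ (2 * (n - k))) * Q2 n := by rw [ih (k+1) h]
      calc (px ^ (2 * (k + 1)) * gbx n (k + 1) + gbx n k) * (Q2 (k+1) * Q2 (n - k))
          = px ^ (2 * (k+1)) * (gbx n (k+1) * (Q2 (k+1) * Q2 (n - k)))
            + gbx n k * (Q2 (k+1) * Q2 (n - k)) := by ring
        _ = px ^ (2 * (k+1)) * ((1 - px ^ (2 * (n - k))) * Q2 n)
            + (1 - px ^ (2 * (k+1))) * Q2 n := by rw [t1, t2]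
        _ = (1 - px ^ (2 * (k+1)) * px ^ (2 * (n - k))) * Q2 n := by ring
        _ = Q2 (n+1) := by
            rw [Q2_succ n, ← pow_add]
            have : 2 * (k+1) + 2 * (n - k) = 2 * (n+1) := by omega
            rw [this]; ring

lemma tA (n k : ℕ) (hk : k ≤ n) :
    gbx n k * (Q2 (k+1) * Q2 (n - k)) = (1 - px ^ (2 * (k+1))) * Q2 n := by
  rw [Q2_succ k]
  calc gbx n k * (Q2 k * (1 - px ^ (2 * (k + 1))) * Q2 (n - k))
      = (1 - px ^ (2 * (k+1))) * (gbx n k * (Q2 k * Q2 (n - k))) := by ring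
    _ = (1 - px ^ (2 * (k+1))) * Q2 n := by rw [Qprod n k hk]

lemma tB (n k : ℕ) (hk : k ≤ n) :
    gbx n (k+1) * (Q2 (k+1) * Q2 (n - k)) = (1 - px ^ (2 * (n - k))) * Q2 n := by
  rcases Nat.lt_or_ge n (k+1) with h | h
  · have hkn : k = n := by omega
    rw [gbx_eq_zero n (k+1) h]
    subst hkn
    simp
  · have h1 : n - k = (n - (k+1)) + 1 := by omega
    rw [h1, Q2_succ (n - (k+1))]
    have h2 : 2 * (n - (k+1) + 1) = 2 * (n - k) := by omega
    rw [h2]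
    calc gbx n (k+1) * (Q2 (k+1) * (Q2 (n - (k+1)) * (1 - px ^ (2 * (n - k)))))
        = (1 - px ^ (2 * (n - k))) * (gbx n (k+1) * (Q2 (k+1) * Q2 (n - (k+1)))) := by ring
      _ = (1 - px ^ (2 * (n - k))) * Q2 n := by rw [Qprod n (k+1) h]

/-- second Pascal rule -/
lemma pascalA (n k : ℕ) (hk : k ≤ n) :
    gbx (n+1) (k+1) = gbx n (k+1) + px ^ (2 * (n - k)) * gbx n k := by
  have hc : IsUnit (Q2 (k+1) * Q2 (n - k)) := (isUnit_Q2 _).mul (isUnit_Q2 _)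
  have key : gbx (n+1) (k+1) * (Q2 (k+1) * Q2 (n - k))
      = (gbx n (k+1) + px ^ (2 * (n - k)) * gbx n k) * (Q2 (k+1) * Q2 (n - k)) := by
    have h0 : n + 1 - (k + 1) = n - k := by omega
    have hq := Qprod (n+1) (k+1) (by omega)
    rw [h0] at hq
    rw [hq, add_mul]
    have : px ^ (2 * (n - k)) * gbx n k * (Q2 (k+1) * Q2 (n - k))
        = px ^ (2 * (n - k)) * (gbx n k * (Q2 (k+1) * Q2 (n - k))) := by ring
    rw [this, tA n k hk, tB n k hk, Q2_succ n]
    have h3 : 2 * (n - k) + 2 * (k + 1) = 2 * (n + 1) := by omega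
    calc Q2 n * (1 - px ^ (2 * (n+1)))
        = (1 - px ^ (2 * (n - k)) * px ^ (2 * (k+1))) * Q2 n := by
          rw [← pow_add, h3]; ring
      _ = (1 - px ^ (2*(n-k))) * Q2 n + px ^ (2*(n-k)) * ((1 - px ^ (2*(k+1))) * Q2 n) := by ring
  have := mul_comm (gbx (n+1) (k+1)) (Q2 (k+1) * Q2 (n - k))
  apply hc.mul_left_cancel
  rw [mul_comm (Q2 (k+1) * Q2 (n-k)) _, mul_comm (Q2 (k+1) * Q2 (n-k)) _]
  exact key

/-- combined three-term recurrence -/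
lemma gbx_rec (N i : ℕ) :
    gbx (2*N+2) (i+2) = px ^ (2*(i+2)) * gbx (2*N) (i+2)
      + (1 + px ^ (2*(2*N+1))) * gbx (2*N) (i+1) + px ^ (2*(2*N - i)) * gbx (2*N) i := by
  rcases le_or_gt i (2*N) with h | h
  · have e1 : (2*N+2) = (2*N+1)+1 := rfl
    have hA := pascalA (2*N+1) (i+1) (by omega)
    have hsub : 2*N + 1 - (i+1) = 2*N - i := by omega
    rw [hsub] at hA
    have hB1 : gbx (2*N+1) (i+2) = px ^ (2*(i+2)) * gbx (2*N) (i+2) + gbx (2*N) (i+1) := rfl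
    have hB2 : gbx (2*N+1) (i+1) = px ^ (2*(i+1)) * gbx (2*N) (i+1) + gbx (2*N) i := rfl
    rw [show 2*N+2 = (2*N+1)+1 from rfl, hA, hB1, hB2]
    have hx : px ^ (2 * (2*N - i)) * (px ^ (2*(i+1)) * gbx (2*N) (i+1))
        = px ^ (2*(2*N+1)) * gbx (2*N) (i+1) := by
      rw [← mul_assoc, ← pow_add]
      congr 2
      omega
    linear_combination hx
  · rw [gbx_eq_zero (2*N+2) (i+2) (by omega), gbx_eq_zero (2*N) (i+2) (by omega),
      gbx_eq_zero (2*N) (i+1) (by omega), gbx_eq_zero (2*N) i (by omega)]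
    ring

lemma gbx_one (N : ℕ) :
    gbx (2*N+2) 1 = px ^ 2 * gbx (2*N) 1 + 1 + px ^ (2*(2*N+1)) := by
  have hA := pascalA (2*N+1) 0 (by omega)
  have hB : gbx (2*N+1) 1 = px ^ (2*1) * gbx (2*N) 1 + gbx (2*N) 0 := rfl
  rw [show 2*N+2 = (2*N+1)+1 from rfl, hA, hB, gbx_zero_right, gbx_zero_right]
  have : 2 * (2*N+1-0) = 2*(2*N+1) := by omega
  rw [this]
  ring


/-- exponent j(j+1) where j = i - N (as integer) -/
def fexp (N i : ℕ) : ℕ := (((i : ℤ) - N) * ((i : ℤ) - N + 1)).toNat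

lemma consec_nonneg (z : ℤ) : 0 ≤ z * (z + 1) := by
  rcases le_or_gt 0 z with h | h
  · positivity
  · nlinarith

lemma fexp_cast (N i : ℕ) : (fexp N i : ℤ) = ((i : ℤ) - N) * ((i : ℤ) - N + 1) :=
  Int.toNat_of_nonneg (consec_nonneg _)

lemma fexp_e1 (N i : ℕ) : fexp (N+1) (i+2) + 2*(i+2) = 2*N + fexp N (i+2) := by
  have h1 := fexp_cast (N+1) (i+2)
  have h2 := fexp_cast N (i+2)
  have : (fexp (N+1) (i+2) : ℤ) + 2*(i+2) = 2*N + fexp N (i+2) := by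
    rw [h1, h2]; push_cast; ring
  exact_mod_cast this

lemma fexp_e2 (N i : ℕ) : fexp (N+1) (i+2) = fexp N (i+1) := by
  have : (fexp (N+1) (i+2) : ℤ) = fexp N (i+1) := by
    rw [fexp_cast, fexp_cast]; push_cast; ring
  exact_mod_cast this

lemma fexp_e3 (N i : ℕ) (h : i ≤ 2*N) :
    fexp (N+1) (i+2) + 2*(2*N - i) = 2*N + 2 + fexp N i := by
  have : (fexp (N+1) (i+2) : ℤ) + 2*((2*N : ℕ) - (i:ℕ) : ℕ) = 2*N + 2 + fexp N i := by
    rw [fexp_cast, fexp_cast]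
    have : ((2*N - i : ℕ) : ℤ) = 2*(N:ℤ) - i := by omega
    rw [this]; push_cast; ring
  exact_mod_cast this

lemma fexp_e0 (N : ℕ) : fexp (N+1) 0 = 2*N + fexp N 0 := by
  have : (fexp (N+1) 0 : ℤ) = 2*N + fexp N 0 := by
    rw [fexp_cast, fexp_cast]; push_cast; ring
  exact_mod_cast this

lemma fexp_e1' (N : ℕ) : fexp (N+1) 1 + 2 = 2*N + fexp N 1 := by
  have : (fexp (N+1) 1 : ℤ) + 2 = 2*N + fexp N 1 := by
    rw [fexp_cast, fexp_cast]; push_cast; ring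
  exact_mod_cast this

lemma fexp_e0' (N : ℕ) : fexp (N+1) 1 = fexp N 0 := by
  have : (fexp (N+1) 1 : ℤ) = fexp N 0 := by
    rw [fexp_cast, fexp_cast]; push_cast; ring
  exact_mod_cast this

lemma fexp_top (N : ℕ) : fexp N (2*N) = N*(N+1) := by
  have : (fexp N (2*N) : ℤ) = N*(N+1) := by
    rw [fexp_cast]; push_cast; ring
  exact_mod_cast this

lemma fexp_add (N j : ℕ) : fexp N (N + j) = j*(j+1) := by
  have : (fexp N (N+j) : ℤ) = j*(j+1) := by
    rw [fexp_cast]; push_cast; ring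
  exact_mod_cast this

lemma fexp_refl (N j : ℕ) (h : j < N) : fexp N (N - 1 - j) = j*(j+1) := by
  have : (fexp N (N-1-j) : ℤ) = j*(j+1) := by
    rw [fexp_cast]
    have : ((N - 1 - j : ℕ) : ℤ) = (N:ℤ) - 1 - j := by omega
    rw [this]; ring
  exact_mod_cast this

lemma fexp_bound (N i : ℕ) (h : i ≤ 2*N) :
    2*N - 1 ≤ fexp N i + (2 * min i (2*N - i) + 2) := by
  have hf := fexp_cast N i
  rcases le_total i N with hc | hc
  · have hmin : min i (2*N - i) = i := by omega
    rw [hmin]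
    have hz : (2*N :ℤ) - 1 ≤ (fexp N i : ℤ) + (2*i + 2) := by
      rw [hf]
      nlinarith [sq_nonneg ((N:ℤ) - i - 1), sq_nonneg ((N:ℤ) - i - 2)]
    omega
  · have hmin : min i (2*N - i) = 2*N - i := by omega
    rw [hmin]
    have hz : (2*N :ℤ) - 1 ≤ (fexp N i : ℤ) + (2*(2*(N:ℤ) - i) + 2) := by
      rw [hf]
      nlinarith [sq_nonneg ((i:ℤ) - N - 1), sq_nonneg ((i:ℤ) - N - 2)]
    have hcast : ((2*N - i : ℕ) : ℤ) = 2*(N:ℤ) - i := by omega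
    omega



lemma Q2_sub_dvd {a b : ℕ} (h : a ≤ b) : px ^ (2*a+2) ∣ Q2 b - Q2 a := by
  induction b, h using Nat.le_induction with
  | base => simp
  | succ b hab ih =>
    have : Q2 (b+1) - Q2 a = (Q2 b - Q2 a) + (-(px ^ (2*(b+1)) * Q2 b)) := by
      rw [Q2_succ b]; ring
    rw [this]
    refine dvd_add ih (dvd_neg.mpr ?_)
    exact Dvd.dvd.mul_right (pow_dvd_pow _ (by omega)) _

lemma u_dvd (N i : ℕ) (h : i ≤ 2*N) :
    px ^ (2 * min i (2*N - i) + 2) ∣ Q2 N * gbx (2*N) i - 1 := by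
  have hc : IsUnit (Q2 i * Q2 (2*N - i)) := (isUnit_Q2 _).mul (isUnit_Q2 _)
  rw [← hc.dvd_mul_right]
  have hq : gbx (2*N) i * (Q2 i * Q2 (2*N - i)) = Q2 (2*N) := Qprod (2*N) i h
  have expand : (Q2 N * gbx (2*N) i - 1) * (Q2 i * Q2 (2*N - i))
      = Q2 N * Q2 (2*N) - Q2 i * Q2 (2*N - i) := by
    calc (Q2 N * gbx (2*N) i - 1) * (Q2 i * Q2 (2*N - i))
        = Q2 N * (gbx (2*N) i * (Q2 i * Q2 (2*N - i))) - Q2 i * Q2 (2*N - i) := by ring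
      _ = Q2 N * Q2 (2*N) - Q2 i * Q2 (2*N - i) := by rw [hq]
  rw [expand]
  rcases le_total i (2*N - i) with hc2 | hc2
  · have hmin : min i (2*N - i) = i := min_eq_left hc2
    rw [hmin]
    have h1 : px ^ (2*i+2) ∣ Q2 N - Q2 i := Q2_sub_dvd (by omega)
    have h2 : px ^ (2*i+2) ∣ Q2 (2*N) - Q2 (2*N - i) := by
      exact dvd_trans (pow_dvd_pow _ (by omega)) (Q2_sub_dvd (by omega))
    have : Q2 N * Q2 (2*N) - Q2 i * Q2 (2*N - i)
        = (Q2 N - Q2 i) * Q2 (2*N) + Q2 i * (Q2 (2*N) - Q2 (2*N - i)) := by ring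
    rw [this]
    exact dvd_add (h1.mul_right _) (h2.mul_left _)
  · have hmin : min i (2*N - i) = 2*N - i := min_eq_right hc2
    rw [hmin]
    have h1 : px ^ (2*(2*N-i)+2) ∣ Q2 N - Q2 (2*N - i) := Q2_sub_dvd (by omega)
    have h2 : px ^ (2*(2*N-i)+2) ∣ Q2 (2*N) - Q2 i := by
      exact dvd_trans (pow_dvd_pow _ (by omega)) (Q2_sub_dvd (by omega))
    have : Q2 N * Q2 (2*N) - Q2 i * Q2 (2*N - i)
        = (Q2 N - Q2 (2*N - i)) * Q2 (2*N) + Q2 (2*N - i) * (Q2 (2*N) - Q2 i) := by ring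
    rw [this]
    exact dvd_add (h1.mul_right _) (h2.mul_left _)

lemma fexp_zero : fexp 0 0 = 0 := by simp [fexp]

/-- signed coefficient -/
noncomputable def sg (N i : ℕ) : PowerSeries ℤ :=
  (-1)^i * (px ^ (fexp N i) * gbx (2*N) i)

noncomputable def SJ (N : ℕ) : Polynomial (PowerSeries ℤ) :=
  ∑ i ∈ Finset.range (2*N+1), PC (sg N i) * W ^ i

noncomputable def PJ (N : ℕ) : Polynomial (PowerSeries ℤ) :=
  (∏ k ∈ Finset.range N, (1 - PC (px^(2*k+2)) * W)) *
  ∏ k ∈ Finset.range N, (PC (px^(2*k)) - W)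

lemma sg_top1 (N : ℕ) : sg N (2*N+1) = 0 := by
  rw [sg, gbx_eq_zero (2*N) (2*N+1) (by omega)]; ring

lemma sg_top2 (N : ℕ) : sg N (2*N+2) = 0 := by
  rw [sg, gbx_eq_zero (2*N) (2*N+2) (by omega)]; ring

lemma cfu_L2 (N i : ℕ) :
    px ^ (fexp (N+1) (i+2)) * gbx (2*N+2) (i+2)
      = px^(2*N) * (px ^ (fexp N (i+2)) * gbx (2*N) (i+2))
      + (1 + px ^ (2*(2*N+1))) * (px ^ (fexp N (i+1)) * gbx (2*N) (i+1))
      + px^(2*N+2) * (px ^ (fexp N i) * gbx (2*N) i) := by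
  rcases le_or_gt i (2*N) with h | h
  · rw [gbx_rec]
    have t1 : px ^ (fexp (N+1) (i+2)) * (px ^ (2*(i+2)) * gbx (2*N) (i+2))
        = px^(2*N) * (px ^ (fexp N (i+2)) * gbx (2*N) (i+2)) := by
      rw [← mul_assoc, ← pow_add, ← mul_assoc, ← pow_add, fexp_e1 N i]
    have t2 : px ^ (fexp (N+1) (i+2)) = px ^ (fexp N (i+1)) := by rw [fexp_e2 N i]
    have t3 : px ^ (fexp (N+1) (i+2)) * (px ^ (2*(2*N - i)) * gbx (2*N) i)
        = px^(2*N+2) * (px ^ (fexp N i) * gbx (2*N) i) := by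
      rw [← mul_assoc, ← pow_add, ← mul_assoc, ← pow_add, fexp_e3 N i h]
    calc px ^ (fexp (N+1) (i+2)) * (px ^ (2*(i+2)) * gbx (2*N) (i+2)
          + (1 + px ^ (2*(2*N+1))) * gbx (2*N) (i+1) + px ^ (2*(2*N - i)) * gbx (2*N) i)
        = px ^ (fexp (N+1) (i+2)) * (px ^ (2*(i+2)) * gbx (2*N) (i+2))
          + (1 + px ^ (2*(2*N+1))) * (px ^ (fexp (N+1) (i+2)) * gbx (2*N) (i+1))
          + px ^ (fexp (N+1) (i+2)) * (px ^ (2*(2*N - i)) * gbx (2*N) i) := by ring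
      _ = _ := by rw [t1, t3, t2]
  · rw [gbx_eq_zero (2*N+2) (i+2) (by omega), gbx_eq_zero (2*N) (i+2) (by omega),
      gbx_eq_zero (2*N) (i+1) (by omega), gbx_eq_zero (2*N) i (by omega)]
    ring

lemma sg_L2 (N i : ℕ) :
    sg (N+1) (i+2) = px^(2*N) * sg N (i+2)
      + (-(1 + px ^ (2*(2*N+1)))) * sg N (i+1) + px^(2*N+2) * sg N i := by
  have h := cfu_L2 N i
  simp only [sg]
  have s2 : ((-1 : PowerSeries ℤ))^(i+2) = (-1)^i := by
    rw [pow_add]; norm_num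
  have s1 : ((-1 : PowerSeries ℤ))^(i+1) = -(-1)^i := by
    rw [pow_add]; norm_num
  rw [s2, s1, show 2*(N+1) = 2*N+2 from by omega]
  linear_combination ((-1 : PowerSeries ℤ))^i * h

lemma sg_L0 (N : ℕ) : sg (N+1) 0 = px^(2*N) * sg N 0 := by
  simp only [sg, pow_zero, one_mul, gbx_zero_right]
  rw [fexp_e0, pow_add]
  ring

lemma sg_L1 (N : ℕ) :
    sg (N+1) 1 = px^(2*N) * sg N 1 + (-(1 + px ^ (2*(2*N+1)))) * sg N 0 := by
  simp only [sg, pow_one, gbx_zero_right]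
  rw [show 2*(N+1) = 2*N+2 from by omega, gbx_one]
  have t1 : px ^ (fexp (N+1) 1) * (px^2 * gbx (2*N) 1)
      = px^(2*N) * (px ^ (fexp N 1) * gbx (2*N) 1) := by
    rw [← mul_assoc, ← pow_add, ← mul_assoc, ← pow_add, fexp_e1' N]
  have t2 : fexp (N+1) 1 = fexp N 0 := fexp_e0' N
  calc (-1) * (px ^ (fexp (N+1) 1) * (px^2 * gbx (2*N) 1 + 1 + px ^ (2*(2*N+1))))
      = -(px ^ (fexp (N+1) 1) * (px^2 * gbx (2*N) 1))
        - (1 + px ^ (2*(2*N+1))) * px ^ (fexp (N+1) 1) := by ring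
    _ = _ := by rw [t1, t2]; ring

/-- tail-shift of a coefficient sequence -/
def sh (g : ℕ → PowerSeries ℤ) : ℕ → PowerSeries ℤ
  | 0 => 0
  | i + 1 => g i

lemma shift_sum (g : ℕ → PowerSeries ℤ) (L : ℕ) :
    ∑ i ∈ Finset.range (L+1), PC (sh g i) * W ^ i
      = (∑ i ∈ Finset.range L, PC (g i) * W ^ i) * W := by
  rw [Finset.sum_range_succ']
  simp only [sh, pow_zero, map_zero, zero_mul, add_zero]
  rw [Finset.sum_mul]
  apply Finset.sum_congr rfl
  intro i _
  rw [pow_succ, mul_assoc]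

lemma mulC_sum (a : PowerSeries ℤ) (g : ℕ → PowerSeries ℤ) (L : ℕ) :
    PC a * (∑ i ∈ Finset.range L, PC (g i) * W ^ i)
      = ∑ i ∈ Finset.range L, PC (a * g i) * W ^ i := by
  rw [Finset.mul_sum]
  apply Finset.sum_congr rfl
  intro i _
  rw [map_mul]; ring

theorem TJ : ∀ N, PJ N = SJ N := by
  intro N
  induction N with
  | zero =>
    have h0 : sg 0 0 = 1 := by
      rw [sg, fexp_zero, gbx_zero_right]; norm_num
    simp [PJ, SJ, h0]
  | succ N ih =>
    set a0 : PowerSeries ℤ := px^(2*N) with ha0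
    set a1 : PowerSeries ℤ := -(1 + px ^ (2*(2*N+1))) with ha1
    set a2 : PowerSeries ℤ := px^(2*N+2) with ha2
    have hbc : (px^(2*N+2)) * px^(2*N) = px^(2*(2*N+1)) := by
      rw [← pow_add]; congr 1; omega
    have hPJ : PJ (N+1) = PJ N * ((1 - PC (px^(2*N+2)) * W) * (PC (px^(2*N)) - W)) := by
      rw [PJ, PJ, Finset.prod_range_succ, Finset.prod_range_succ]
      ring
    have hfac : (1 - PC (px^(2*N+2)) * W) * (PC (px^(2*N)) - W)
        = PC a0 + PC a1 * W + PC a2 * W^2 := by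
      rw [ha1, map_neg, map_add, map_one, ← hbc, map_mul, ha0, ha2]
      ring
    set g0 : ℕ → PowerSeries ℤ := fun j => a0 * sg N j with hg0
    set g1 : ℕ → PowerSeries ℤ := fun j => a1 * sg N j with hg1
    set g2 : ℕ → PowerSeries ℤ := fun j => a2 * sg N j with hg2
    have hSJ1 : SJ (N+1) = ∑ i ∈ Finset.range (2*N+3),
        PC (g0 i + sh g1 i + sh (sh g2) i) * W ^ i := by
      rw [SJ]
      have hrange : 2*(N+1)+1 = 2*N+3 := by omega
      rw [hrange]
      apply Finset.sum_congr rfl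
      intro i _
      congr 1
      match i with
      | 0 =>
        rw [sg_L0]
        simp only [sh, hg0, hg1, hg2, ha0, ha1, ha2, add_zero]
      | 1 =>
        rw [sg_L1]
        simp only [sh, hg0, hg1, hg2, ha0, ha1, ha2, add_zero]
      | (i+2) =>
        rw [sg_L2]
        simp only [sh, hg0, hg1, hg2, ha0, ha1, ha2, add_zero]
    have hsplit : SJ (N+1)
        = (∑ i ∈ Finset.range (2*N+3), PC (g0 i) * W ^ i)
          + (∑ i ∈ Finset.range (2*N+3), PC (sh g1 i) * W ^ i)
          + (∑ i ∈ Finset.range (2*N+3), PC (sh (sh g2) i) * W ^ i) := by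
      rw [hSJ1, ← Finset.sum_add_distrib, ← Finset.sum_add_distrib]
      apply Finset.sum_congr rfl
      intro i _
      rw [map_add, map_add]
      ring
    have hs1 : (∑ i ∈ Finset.range (2*N+3), PC (g0 i) * W ^ i) = PC a0 * SJ N := by
      rw [show 2*N+3 = (2*N+2)+1 from rfl, Finset.sum_range_succ,
        show 2*N+2 = (2*N+1)+1 from rfl, Finset.sum_range_succ]
      rw [hg0]
      simp only [sg_top1, sg_top2, mul_zero, map_zero, zero_mul, add_zero]
      rw [SJ, mulC_sum]
    have hs2 : (∑ i ∈ Finset.range (2*N+3), PC (sh g1 i) * W ^ i) = PC a1 * SJ N * W := by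
      rw [show 2*N+3 = (2*N+2)+1 from rfl, shift_sum g1 (2*N+2),
        show 2*N+2 = (2*N+1)+1 from rfl, Finset.sum_range_succ]
      rw [hg1]
      simp only [sg_top1, mul_zero, map_zero, zero_mul, add_zero]
      rw [SJ, mulC_sum]
    have hs3 : (∑ i ∈ Finset.range (2*N+3), PC (sh (sh g2) i) * W ^ i)
        = PC a2 * SJ N * W * W := by
      rw [show 2*N+3 = (2*N+2)+1 from rfl, shift_sum (sh g2) (2*N+2),
        show 2*N+2 = (2*N+1)+1 from rfl, shift_sum g2 (2*N+1)]
      rw [hg2, SJ, mulC_sum]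
    rw [hPJ, hfac, ih, hsplit, hs1, hs2, hs3]
    ring




lemma Q2_def (n : ℕ) : Q2 n = ∏ k ∈ Finset.range n, (1 - px ^ (2 * (k + 1))) := rfl

lemma neg_one_pow_eq_neg {a b : ℕ} (h : Odd (a + b)) :
    ((-1 : PowerSeries ℤ))^a = -(-1)^b := by
  have h2 : (-1 : R)^(a+b) = -1 := Odd.neg_one_pow h
  rw [pow_add] at h2
  have hb : (-1:R)^b * (-1)^b = 1 := by
    rw [← pow_add]; exact Even.neg_one_pow ⟨b, rfl⟩
  calc (-1:R)^a = (-1)^a * ((-1)^b * (-1)^b) := by rw [hb, mul_one]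
    _ = ((-1)^a * (-1)^b) * (-1)^b := by ring
    _ = -(-1)^b := by rw [h2]; ring

lemma geom (c m : ℕ) :
    (W - 1) * ∑ t ∈ Finset.range m, W^(c+t) = W^(c+m) - W^c := by
  rw [Finset.mul_sum]
  have : ∀ t ∈ Finset.range m, (W - 1) * W^(c+t) = W^(c+(t+1)) - W^(c+t) := by
    intro t _
    rw [show c+(t+1) = (c+t)+1 from rfl, pow_succ]
    ring
  rw [Finset.sum_congr rfl this, Finset.sum_range_sub (fun t => W^(c+t)) m, add_zero]

noncomputable def EP (N : ℕ) : Polynomial (PowerSeries ℤ) :=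
  ∑ j ∈ Finset.range N, Polynomial.C ((-1)^(N+j) * px^(j*(j+1)))
    * ∑ t ∈ Finset.range (2*j+1), W^((N-1-j)+t)

lemma hpair (N : ℕ) (hN : 1 ≤ N) :
    ∑ i ∈ Finset.range (2*N+1), PC ((-1)^i * px^(fexp N i)) * W^i
      = (W - 1) * EP N + PC (px^(N*(N+1))) * W^(2*N) := by
  set h : ℕ → Polynomial (PowerSeries ℤ) := fun i => PC ((-1)^i * px^(fexp N i)) * W^i with hh
  have hsplit : ∑ i ∈ Finset.range (2*N+1), h i
      = (∑ j ∈ Finset.range N, (h (N+j) + h (N-1-j))) + h (2*N) := by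
    rw [show 2*N+1 = N + (N+1) from by omega, Finset.sum_range_add]
    rw [Finset.sum_range_succ, show N + N = 2*N from by omega]
    rw [← Finset.sum_range_reflect (fun j => h j) N]
    rw [Finset.sum_add_distrib]
    ring
  rw [hsplit]
  have hterm : ∀ j ∈ Finset.range N, h (N+j) + h (N-1-j)
      = (W - 1) * (Polynomial.C ((-1)^(N+j) * px^(j*(j+1)))
          * ∑ t ∈ Finset.range (2*j+1), W^((N-1-j)+t)) := by
    intro j hj
    have hjN : j < N := Finset.mem_range.mp hj
    have e1 : h (N+j) = PC ((-1)^(N+j) * px^(j*(j+1))) * W^(N+j) := by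
      rw [hh]; simp only []; rw [fexp_add]
    have e2 : h (N-1-j) = -(PC ((-1)^(N+j) * px^(j*(j+1))) * W^(N-1-j)) := by
      rw [hh]; simp only []
      rw [fexp_refl N j hjN, neg_one_pow_eq_neg (a := N-1-j) (b := N+j) ⟨N-1, by omega⟩]
      rw [map_mul, map_mul, map_neg]
      ring
    rw [e1, e2]
    have := geom (N-1-j) (2*j+1)
    rw [show (N-1-j)+(2*j+1) = N+j from by omega] at this
    calc PC ((-1)^(N+j) * px^(j*(j+1))) * W^(N+j)
          - PC ((-1)^(N+j) * px^(j*(j+1))) * W^(N-1-j)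
        = PC ((-1)^(N+j) * px^(j*(j+1))) * (W^(N+j) - W^(N-1-j)) := by ring
      _ = _ := by rw [← this]; ring
  rw [Finset.sum_congr rfl hterm]
  have htop : h (2*N) = PC (px^(N*(N+1))) * W^(2*N) := by
    rw [hh]; simp only []
    rw [fexp_top]
    have : ((-1 : R))^(2*N) = 1 := Even.neg_one_pow ⟨N, by omega⟩
    rw [this, one_mul]
  rw [htop, EP, Finset.mul_sum]

noncomputable def GG (N : ℕ) : Polynomial (PowerSeries ℤ) :=
  PC (Q2 N) * (∏ k ∈ Finset.range N, (1 - PC (px^(2*k+2)) * W))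
    * ∏ k ∈ Finset.range (N-1), (PC (px^(2*(k+1))) - W)

noncomputable def ErrP (N : ℕ) : Polynomial (PowerSeries ℤ) :=
  ∑ i ∈ Finset.range (2*N+1),
    PC ((-1)^i * (px ^ (fexp N i) * (Q2 N * gbx (2*N) i - 1))) * W^i

lemma hkey (N : ℕ) (hN : 1 ≤ N) :
    (1 - W) * (GG N + EP N) = PC (px^(N*(N+1))) * W^(2*N) + ErrP N := by
  have hprodsplit : ∏ k ∈ Finset.range N, (PC (px^(2*k)) - W)
      = (∏ k ∈ Finset.range (N-1), (PC (px^(2*(k+1))) - W)) * (1 - W) := by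
    rw [show N = (N-1)+1 from by omega, Finset.prod_range_succ']
    congr 1
  have hG : (1 - W) * GG N = PC (Q2 N) * PJ N := by
    rw [GG, PJ, hprodsplit]
    ring
  have hEQ1 : PC (Q2 N) * PJ N
      = ∑ i ∈ Finset.range (2*N+1), PC (Q2 N * sg N i) * W^i := by
    rw [TJ N, SJ, mulC_sum]
  have hdecomp : ∑ i ∈ Finset.range (2*N+1), PC (Q2 N * sg N i) * W^i
      = (∑ i ∈ Finset.range (2*N+1), PC ((-1)^i * px^(fexp N i)) * W^i) + ErrP N := by
    rw [ErrP, ← Finset.sum_add_distrib]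
    apply Finset.sum_congr rfl
    intro i _
    have : Q2 N * sg N i
        = ((-1)^i * px^(fexp N i)) + ((-1)^i * (px ^ (fexp N i) * (Q2 N * gbx (2*N) i - 1))) := by
      rw [sg]; ring
    rw [this, map_add]
    ring
  have hp := hpair N hN
  calc (1 - W) * (GG N + EP N)
      = (1 - W) * GG N + (1 - W) * EP N := by ring
    _ = ((∑ i ∈ Finset.range (2*N+1), PC ((-1)^i * px^(fexp N i)) * W^i) + ErrP N)
        + (1 - W) * EP N := by rw [hG, hEQ1, hdecomp]
    _ = ((W - 1) * EP N + PC (px^(N*(N+1))) * W^(2*N) + ErrP N) + (1 - W) * EP N := by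
        rw [hp]
    _ = _ := by ring

lemma eval_dvd (N : ℕ) (hN : 1 ≤ N) :
    px^(2*N-1) ∣ Polynomial.eval 1 (GG N) + Polynomial.eval 1 (EP N) := by
  set I : Ideal (PowerSeries ℤ) := Ideal.span {px^(2*N-1)} with hI
  set mk : PowerSeries ℤ →+* (PowerSeries ℤ) ⧸ I := Ideal.Quotient.mk I with hmk
  have hmem : ∀ r : PowerSeries ℤ, px^(2*N-1) ∣ r → mk r = 0 := by
    intro r hr
    rw [hmk, Ideal.Quotient.eq_zero_iff_mem, hI, Ideal.mem_span_singleton]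
    exact hr
  have hRHS : Polynomial.map mk (PC (px^(N*(N+1))) * W^(2*N) + ErrP N) = 0 := by
    rw [Polynomial.map_add, Polynomial.map_mul, Polynomial.map_pow, Polynomial.map_C,
      Polynomial.map_X]
    have h1 : mk (px^(N*(N+1))) = 0 := by
      apply hmem
      apply pow_dvd_pow
      have h2 : 2*N ≤ N*(N+1) := by nlinarith
      omega
    rw [h1, map_zero, zero_mul, zero_add]
    rw [ErrP, Polynomial.map_sum]
    apply Finset.sum_eq_zero
    intro i hi
    have hi2N : i ≤ 2*N := by have := Finset.mem_range.mp hi; omega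
    rw [Polynomial.map_mul, Polynomial.map_pow, Polynomial.map_C, Polynomial.map_X]
    have h2 : mk ((-1)^i * (px ^ (fexp N i) * (Q2 N * gbx (2*N) i - 1))) = 0 := by
      apply hmem
      have hd1 : px^(fexp N i + (2 * min i (2*N - i) + 2))
          ∣ px ^ (fexp N i) * (Q2 N * gbx (2*N) i - 1) := by
        rw [pow_add]
        exact mul_dvd_mul_left _ (u_dvd N i hi2N)
      exact ((pow_dvd_pow px (fexp_bound N i hi2N)).trans hd1).mul_left _
    rw [h2, map_zero, zero_mul]
  have hmain := congrArg (Polynomial.map mk) (hkey N hN)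
  rw [hRHS, Polynomial.map_mul] at hmain
  have h1W : Polynomial.map mk (1 - W) = 1 - Polynomial.X := by
    rw [Polynomial.map_sub, Polynomial.map_one, Polynomial.map_X]
  rw [h1W] at hmain
  have hmonic : (Polynomial.X - 1 : Polynomial ((PowerSeries ℤ) ⧸ I)).Monic := by
    have := Polynomial.monic_X_sub_C (1 : (PowerSeries ℤ) ⧸ I)
    rwa [Polynomial.C_1] at this
  have hzero : Polynomial.map mk (GG N + EP N) = 0 := by
    have h2 : (Polynomial.X - 1) * Polynomial.map mk (GG N + EP N) = 0 := by
      have : ((1 : Polynomial ((PowerSeries ℤ) ⧸ I)) - Polynomial.X)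
          * Polynomial.map mk (GG N + EP N) = 0 := hmain
      calc (Polynomial.X - 1) * Polynomial.map mk (GG N + EP N)
          = -((1 - Polynomial.X) * Polynomial.map mk (GG N + EP N)) := by ring
        _ = 0 := by rw [this, neg_zero]
    exact hmonic.mul_right_eq_zero_iff.mp h2
  have heval : mk (Polynomial.eval 1 (GG N + EP N)) = 0 := by
    rw [← Polynomial.eval_one_map mk, hzero, Polynomial.eval_zero]
  rw [Polynomial.eval_add] at heval
  rw [hmk, Ideal.Quotient.eq_zero_iff_mem, hI, Ideal.mem_span_singleton] at heval
  exact heval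

lemma hG1 (N : ℕ) (hN : 1 ≤ N) :
    Polynomial.eval 1 (GG N) = (-1)^(N-1) * (Q2 N^2 * Q2 (N-1)) := by
  rw [GG]
  rw [Polynomial.eval_mul, Polynomial.eval_mul, Polynomial.eval_C,
    Polynomial.eval_prod, Polynomial.eval_prod]
  have h1 : ∏ k ∈ Finset.range N,
      Polynomial.eval 1 (1 - PC (px^(2*k+2)) * W) = Q2 N := by
    rw [Q2_def]
    apply Finset.prod_congr rfl
    intro k _
    rw [Polynomial.eval_sub, Polynomial.eval_one, Polynomial.eval_mul,
      Polynomial.eval_C, Polynomial.eval_X, mul_one, show 2*k+2 = 2*(k+1) from by ring]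
  have h2 : ∏ k ∈ Finset.range (N-1),
      Polynomial.eval 1 (PC (px^(2*(k+1))) - W) = (-1)^(N-1) * Q2 (N-1) := by
    have e1 : ∀ k ∈ Finset.range (N-1),
        Polynomial.eval 1 (PC (px^(2*(k+1))) - W) = (-1) * (1 - px^(2*(k+1))) := by
      intro k _
      rw [Polynomial.eval_sub, Polynomial.eval_C, Polynomial.eval_X]
      ring
    rw [Finset.prod_congr rfl e1, Finset.prod_mul_distrib, Finset.prod_const,
      Finset.card_range, Q2_def]
  rw [h1, h2]
  ring

lemma hE1 (N : ℕ) :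
    Polynomial.eval 1 (EP N) = ∑ j ∈ Finset.range N,
      (-1)^(N+j) * (@PowerSeries.C ℤ _ (2*(j:ℤ)+1) * px^(j*(j+1))) := by
  rw [EP, Polynomial.eval_finset_sum]
  apply Finset.sum_congr rfl
  intro j _
  rw [Polynomial.eval_mul, Polynomial.eval_C, Polynomial.eval_finset_sum]
  have h1 : ∀ t ∈ Finset.range (2*j+1),
      Polynomial.eval 1 ((W : Polynomial (PowerSeries ℤ))^((N-1-j)+t)) = 1 := by
    intro t _
    rw [Polynomial.eval_pow, Polynomial.eval_X, one_pow]
  rw [Finset.sum_congr rfl h1, Finset.sum_const, Finset.card_range, nsmul_eq_mul, mul_one]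
  have h2 : ((2*j+1 : ℕ) : PowerSeries ℤ) = @PowerSeries.C ℤ _ (2*(j:ℤ)+1) := by
    rw [show (2*(j:ℤ)+1) = ((2*j+1 : ℕ) : ℤ) from by push_cast; ring]
    rw [map_natCast]
  rw [h2]
  ring

lemma key (N : ℕ) (hN : 1 ≤ N) :
    px^(2*N-1) ∣ Q2 N^2 * Q2 (N-1)
      - ∑ j ∈ Finset.range N, @PowerSeries.C ℤ _ ((-1)^j * (2*(j:ℤ)+1)) * px^(j*(j+1)) := by
  have hdvd := (eval_dvd N hN).mul_left ((-1 : PowerSeries ℤ)^(N-1))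
  have hexp : (-1 : PowerSeries ℤ)^(N-1)
      * (Polynomial.eval 1 (GG N) + Polynomial.eval 1 (EP N))
      = Q2 N^2 * Q2 (N-1)
      - ∑ j ∈ Finset.range N, @PowerSeries.C ℤ _ ((-1)^j * (2*(j:ℤ)+1)) * px^(j*(j+1)) := by
    rw [hG1 N hN, hE1 N, mul_add, Finset.mul_sum]
    have hsq : (-1 : PowerSeries ℤ)^(N-1) * (-1)^(N-1) = 1 := by
      rw [← pow_add]
      exact Even.neg_one_pow ⟨N-1, rfl⟩
    have hterm : ∀ j ∈ Finset.range N,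
        (-1 : PowerSeries ℤ)^(N-1) * ((-1)^(N+j) * (@PowerSeries.C ℤ _ (2*(j:ℤ)+1) * px^(j*(j+1))))
        = -(@PowerSeries.C ℤ _ ((-1)^j * (2*(j:ℤ)+1)) * px^(j*(j+1))) := by
      intro j _
      have hsign : (-1 : PowerSeries ℤ)^(N-1) * (-1)^(N+j) = -(-1)^j := by
        rw [← pow_add, show (N-1) + (N+j) = (2*N-1) + j from by omega, pow_add]
        have : (-1 : PowerSeries ℤ)^(2*N-1) = -1 := Odd.neg_one_pow ⟨N-1, by omega⟩
        rw [this]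
        ring
      have hC : @PowerSeries.C ℤ _ ((-1)^j * (2*(j:ℤ)+1))
          = (-1 : PowerSeries ℤ)^j * @PowerSeries.C ℤ _ (2*(j:ℤ)+1) := by
        rw [map_mul, map_pow, map_neg, map_one]
      rw [hC]
      calc (-1 : PowerSeries ℤ)^(N-1) * ((-1)^(N+j) * (@PowerSeries.C ℤ _ (2*(j:ℤ)+1) * px^(j*(j+1))))
          = ((-1 : PowerSeries ℤ)^(N-1) * (-1)^(N+j)) * (@PowerSeries.C ℤ _ (2*(j:ℤ)+1) * px^(j*(j+1))) := by
            ring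
        _ = _ := by rw [hsign]; ring
    rw [Finset.sum_congr rfl hterm]
    calc (-1 : PowerSeries ℤ)^(N-1) * ((-1)^(N-1) * (Q2 N^2 * Q2 (N-1)))
          + ∑ j ∈ Finset.range N, -(@PowerSeries.C ℤ _ ((-1)^j * (2*(j:ℤ)+1)) * px^(j*(j+1)))
        = ((-1 : PowerSeries ℤ)^(N-1) * (-1)^(N-1)) * (Q2 N^2 * Q2 (N-1))
          - ∑ j ∈ Finset.range N, @PowerSeries.C ℤ _ ((-1)^j * (2*(j:ℤ)+1)) * px^(j*(j+1)) := by
          rw [Finset.sum_neg_distrib]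
          ring
      _ = _ := by rw [hsq]; ring
  rw [hexp] at hdvd
  exact hdvd


/-- The formal power series (q^r;q^r)_∞ = ∏_{k≥1} (1 - q^{rk}) in ℤ[[q]]. -/
noncomputable def etaProd (r : ℕ) : PowerSeries ℤ :=
  PowerSeries.mk fun N =>
    @PowerSeries.coeff ℤ _ N (∏ k ∈ Finset.range (N + 1), (1 - PowerSeries.X ^ (r * (k + 1))))

lemma coeff_eta (n m : ℕ) (h : m ≤ n) :
    @PowerSeries.coeff ℤ _ m (etaProd 2) = @PowerSeries.coeff ℤ _ m (Q2 n) := by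
  have h0 : @PowerSeries.coeff ℤ _ m (etaProd 2) = @PowerSeries.coeff ℤ _ m (Q2 (m+1)) := by
    rw [etaProd, PowerSeries.coeff_mk, Q2_def]
  rw [h0]
  have hzero : @PowerSeries.coeff ℤ _ m (Q2 n - Q2 (m+1)) = 0 := by
    rcases le_total (m+1) n with hc | hc
    · have := Q2_sub_dvd hc
      rw [PowerSeries.X_pow_dvd_iff] at this
      exact this m (by omega)
    · have := Q2_sub_dvd hc
      have h2 : @PowerSeries.coeff ℤ _ m (Q2 (m+1) - Q2 n) = 0 := by
        rw [PowerSeries.X_pow_dvd_iff] at this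
        exact this m (by omega)
      rw [map_sub] at h2 ⊢
      omega
  rw [map_sub] at hzero
  omega

/-- Jacobi's identity: ∑_{n≥0} (-1)^n (2n+1) q^{n(n+1)} = (q^2;q^2)_∞^3. -/
theorem jacobi_identity :
    (PowerSeries.mk fun N : ℕ =>
        ∑ n ∈ Finset.range (N + 1), if N = n * (n + 1) then ((-1) ^ n * (2 * n + 1) : ℤ) else 0) =
      etaProd 2 ^ 3 := by
  ext M
  rw [PowerSeries.coeff_mk]
  set N := M + 2 with hN
  have hstep1 : @PowerSeries.coeff ℤ _ M (etaProd 2 ^ 3)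
      = @PowerSeries.coeff ℤ _ M (Q2 N^2 * Q2 (N-1)) := by
    have d1 : px^(M+1) ∣ etaProd 2 - Q2 N := by
      rw [PowerSeries.X_pow_dvd_iff]
      intro m hm
      rw [map_sub, coeff_eta N m (by omega), sub_self]
    have d2 : px^(M+1) ∣ etaProd 2 - Q2 (N-1) := by
      rw [PowerSeries.X_pow_dvd_iff]
      intro m hm
      rw [map_sub, coeff_eta (N-1) m (by omega), sub_self]
    have hfact : etaProd 2 ^ 3 - Q2 N^2 * Q2 (N-1)
        = (etaProd 2 - Q2 N) * (etaProd 2^2 + etaProd 2 * Q2 N)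
          + Q2 N^2 * (etaProd 2 - Q2 (N-1)) := by ring
    have hd : px^(M+1) ∣ etaProd 2 ^ 3 - Q2 N^2 * Q2 (N-1) := by
      rw [hfact]
      exact dvd_add (d1.mul_right _) (d2.mul_left _)
    rw [PowerSeries.X_pow_dvd_iff] at hd
    have := hd M (by omega)
    rw [map_sub] at this
    omega
  have hstep2 : @PowerSeries.coeff ℤ _ M (Q2 N^2 * Q2 (N-1))
      = @PowerSeries.coeff ℤ _ M (∑ j ∈ Finset.range N,
          @PowerSeries.C ℤ _ ((-1)^j * (2*(j:ℤ)+1)) * px^(j*(j+1))) := by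
    have hd := key N (by omega)
    rw [PowerSeries.X_pow_dvd_iff] at hd
    have := hd M (by omega)
    rw [map_sub] at this
    omega
  have hstep3 : @PowerSeries.coeff ℤ _ M (∑ j ∈ Finset.range N,
        @PowerSeries.C ℤ _ ((-1)^j * (2*(j:ℤ)+1)) * px^(j*(j+1)))
      = ∑ n ∈ Finset.range (M + 1), if M = n * (n + 1) then ((-1) ^ n * (2 * n + 1) : ℤ) else 0 := by
    rw [map_sum]
    have hterm : ∀ j ∈ Finset.range N,
        @PowerSeries.coeff ℤ _ M (@PowerSeries.C ℤ _ ((-1)^j * (2*(j:ℤ)+1)) * px^(j*(j+1)))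
        = if M = j * (j + 1) then ((-1) ^ j * (2 * j + 1) : ℤ) else 0 := by
      intro j _
      rw [PowerSeries.coeff_C_mul, PowerSeries.coeff_X_pow]
      by_cases hc : M = j*(j+1)
      · rw [if_pos hc, if_pos hc, mul_one]
      · rw [if_neg hc, if_neg hc, mul_zero]
    rw [Finset.sum_congr rfl hterm]
    rw [hN, show M + 2 = (M+1)+1 from rfl, Finset.sum_range_succ]
    have : ¬ (M = (M+1) * ((M+1) + 1)) := by nlinarith
    rw [if_neg this, add_zero]
  rw [hstep1, hstep2, hstep3]


end JacobiAux
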